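/- Let i ∈ {0, 1, …, t−1}. (a) If there exists z ∈ {i, i+1, …, t−1} with α_z = 0, and z is the smallest such index, then g_{n−2+2^i−s_{i−1}} = f_z; if α_i = α_{i+1} = ⋯ = α_{t−1} = 1, then g_{n−2+2^i−s_{i−1}} = 0. (b) If there exists u ∈ {i, i+1, …, t−1} with α_u = 1, and u is the smallest such index, then w₃^{s_{i−1}}·g_{n−2−s_{i−1}} = f_u; if α_i = α_{i+1} = ⋯ = α_{t−1} = 0, then w₃^{s_{i−1}}·g_{n−2−s_{i−1}} = 0. -/
import Mathlib


open MvPolynomial Finset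

noncomputable section

/-- `R2 = (ℤ/2)[w₂, w₃]`, the polynomial ring in two variables over `ℤ/2ℤ`. -/
abbrev R2 : Type := MvPolynomial (Fin 2) (ZMod 2)

/-- The variable `w₂`. -/
def w2 : R2 := X 0

/-- The variable `w₃`. -/
def w3 : R2 := X 1

/-- The polynomials `g_r`: `g₀ = 1`, `g₁ = 0`, `g₂ = w₂`,
`g_{r+3} = w₂ g_{r+1} + w₃ g_r`. -/
def g : ℕ → R2
  | 0 => 1
  | 1 => 0
  | 2 => w2
  | (r+3) => w2 * g (r+1) + w3 * g r

/-- `alpha N j` is the `j`-th binary digit of `N`. -/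
def alpha (N j : ℕ) : ℕ := if N.testBit j then 1 else 0

/-- `sPart N i = Σ_{j=0}^{i-1} α_j 2^j` (so the paper's `s_i` is `sPart N (i+1)`,
and `s_{i-1}` is `sPart N i`; in particular `s_{-1} = sPart N 0 = 0`).  Here
`N = n - 2^t + 1`. -/
def sPart (N i : ℕ) : ℕ := ∑ j ∈ Finset.range i, alpha N j * 2^j

/-- The polynomial `f_i = w₃^{α_i s_{i-1}} g_{n-2+2^i-s_i}`. -/
def f (n t i : ℕ) : R2 :=
  w3 ^ (alpha (n+1-2^t) i * sPart (n+1-2^t) i) * g (n - 2 + 2^i - sPart (n+1-2^t) (i+1))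

lemma two_eq_zero : (2:R2) = 0 := by exact_mod_cast CharP.cast_eq_zero R2 2

lemma g_add3 (r : ℕ) : g (r+3) = w2 * g (r+1) + w3 * g r := by simp [g]

lemma g_pair : ∀ r : ℕ, g (2*r+2) = g (r+1)^2 + w2 * g r^2 ∧ g (2*r+3) = w3 * g r^2 := by
  intro r
  induction r using Nat.strong_induction_on with
  | _ r ih =>
    match r with
    | 0 =>
      constructor
      · show g 2 = g 1 ^ 2 + w2 * g 0 ^ 2; simp [g]
      · show g 3 = w3 * g 0 ^ 2; simp [g, g_add3]
    | 1 =>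
      constructor
      · show g 4 = g 2 ^ 2 + w2 * g 1 ^ 2
        have : (4:ℕ) = 1 + 3 := rfl
        rw [this, g_add3]; simp [g]; ring
      · show g 5 = w3 * g 1 ^ 2
        have : (5:ℕ) = 2 + 3 := rfl
        rw [this, g_add3, g_add3]; simp [g]
        linear_combination (w2*w3) * two_eq_zero
    | (r+2) =>
      obtain ⟨IH1a, IH1b⟩ := ih r (by omega)
      obtain ⟨IH2a, IH2b⟩ := ih (r+1) (by omega)
      have n1 : 2*(r+1)+2 = 2*r+4 := by ring
      have n2 : 2*(r+1)+3 = 2*r+5 := by ring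
      rw [n1] at IH2a; rw [n2] at IH2b
      constructor
      · have e1 : 2*(r+2)+2 = (2*r+3)+3 := by ring
        have e2 : 2*r+3+1 = 2*r+4 := by ring
        rw [e1, g_add3, e2, IH2a, IH1b, g_add3]
        linear_combination (-(w2*w3*(g r)*(g (r+1)))) * two_eq_zero
      · have e1 : 2*(r+2)+3 = (2*r+4)+3 := by ring
        have e2 : 2*r+4+1 = 2*r+5 := by ring
        rw [e1, g_add3, e2, IH2a, IH2b]
        linear_combination (w2*w3*(g (r+1))^2) * two_eq_zero

lemma g_zero : ∀ k : ℕ, g (2^(k+2) - 3) = 0 := by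
  intro k
  induction k with
  | zero => show g 1 = 0; rfl
  | succ k ih =>
    have h4 : 4 ≤ 2^(k+2) := by
      calc (4:ℕ) = 2^2 := rfl
      _ ≤ 2^(k+2) := Nat.pow_le_pow_right (by norm_num) (by omega)
    have e : 2^(k+1+2) - 3 = 2*(2^(k+2)-3)+3 := by
      have : 2^(k+1+2) = 2*2^(k+2) := by ring
      omega
    rw [e, (g_pair _).2, ih]
    ring

lemma alpha_eq (N i : ℕ) : alpha N i = N / 2^i % 2 := by
  rw [alpha, Nat.testBit_eq_decide_div_mod_eq]
  rcases Nat.mod_two_eq_zero_or_one (N / 2^i) with h | h <;> simp [h]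

lemma sPart_succ (N i : ℕ) : sPart N (i+1) = sPart N i + alpha N i * 2^i :=
  Finset.sum_range_succ _ _

lemma sPart_mod (N i : ℕ) : sPart N i = N % 2^i := by
  induction i with
  | zero => simp [sPart, Nat.mod_one]
  | succ i ih =>
    rw [sPart_succ, ih, alpha_eq]
    have h : (2:ℕ)^(i+1) = 2^i * 2 := by ring
    rw [h, Nat.mod_mul]; ring

lemma ones_sum (N i : ℕ) : ∀ z, i ≤ z → (∀ y, i ≤ y → y < z → alpha N y = 1) →
    sPart N z + 2^i = sPart N i + 2^z := by
  intro z hz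
  induction z, hz using Nat.le_induction with
  | base => intro _; rfl
  | succ z hz ih =>
    intro hy
    have h1 := ih (fun y a b => hy y a (by omega))
    rw [sPart_succ, hy z hz (by omega)]
    have h3 : (2:ℕ)^(z+1) = 2*2^z := by ring
    omega

lemma zeros_sum (N i : ℕ) : ∀ z, i ≤ z → (∀ y, i ≤ y → y < z → alpha N y = 0) →
    sPart N z = sPart N i := by
  intro z hz
  induction z, hz using Nat.le_induction with
  | base => intro _; rfl
  | succ z hz ih =>
    intro hy
    have h1 := ih (fun y a b => hy y a (by omega))
    rw [sPart_succ, hy z hz (by omega)]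
    omega

/-- Lemma 3.6: with `N = n - 2^t + 1`, `α_j = alpha N j` and `s_{i-1} = sPart N i`:
(a) if `z` is the smallest index in `{i, …, t-1}` with `α_z = 0`, then
`g_{n-2+2^i-s_{i-1}} = f_z`, and if no such index exists then `g_{n-2+2^i-s_{i-1}} = 0`;
(b) if `u` is the smallest index in `{i, …, t-1}` with `α_u = 1`, then
`w₃^{s_{i-1}} g_{n-2-s_{i-1}} = f_u`, and if no such index exists then
`w₃^{s_{i-1}} g_{n-2-s_{i-1}} = 0`. -/
theorem f_from_g (n t : ℕ) (hn : 7 ≤ n) (ht : 3 ≤ t)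
    (h1 : 2 ^ t - 1 ≤ n) (h2 : n < 2 ^ (t + 1) - 1) :
    ∀ i < t,
      (∀ z, i ≤ z → z < t → alpha (n + 1 - 2 ^ t) z = 0 →
        (∀ y, i ≤ y → y < z → alpha (n + 1 - 2 ^ t) y = 1) →
        g (n - 2 + 2 ^ i - sPart (n + 1 - 2 ^ t) i) = f n t z) ∧
      ((∀ y, i ≤ y → y < t → alpha (n + 1 - 2 ^ t) y = 1) →
        g (n - 2 + 2 ^ i - sPart (n + 1 - 2 ^ t) i) = 0) ∧
      (∀ u, i ≤ u → u < t → alpha (n + 1 - 2 ^ t) u = 1 →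
        (∀ y, i ≤ y → y < u → alpha (n + 1 - 2 ^ t) y = 0) →
        w3 ^ (sPart (n + 1 - 2 ^ t) i) * g (n - 2 - sPart (n + 1 - 2 ^ t) i) = f n t u) ∧
      ((∀ y, i ≤ y → y < t → alpha (n + 1 - 2 ^ t) y = 0) →
        w3 ^ (sPart (n + 1 - 2 ^ t) i) * g (n - 2 - sPart (n + 1 - 2 ^ t) i) = 0) := by
  have hp : (1:ℕ) ≤ 2^t := Nat.one_le_two_pow
  have h2t : (2:ℕ)^(t+1) = 2*2^t := by ring
  have hNlt : n + 1 - 2^t < 2^t := by omega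
  intro i hi
  have hpi : sPart (n+1-2^t) i < 2^i := by
    rw [sPart_mod]; exact Nat.mod_lt _ (by positivity)
  refine ⟨?_, ?_, ?_, ?_⟩
  · intro z hiz hzt hz0 hones
    rw [f, hz0, zero_mul, pow_zero, one_mul]
    have hsum := ones_sum (n+1-2^t) i z hiz hones
    have hz1 : sPart (n+1-2^t) (z+1) = sPart (n+1-2^t) z := by
      rw [sPart_succ, hz0]; ring
    have h4 : (2:ℕ)^i ≤ 2^z := Nat.pow_le_pow_right (by norm_num) hiz
    rw [hz1]; congr 1; omega
  · intro hall
    have hsum := ones_sum (n+1-2^t) i t (le_of_lt hi) hall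
    have hfull : sPart (n+1-2^t) t = n+1-2^t := by
      rw [sPart_mod]; exact Nat.mod_eq_of_lt hNlt
    have h4 : (2:ℕ)^i ≤ 2^t := Nat.pow_le_pow_right (by norm_num) (le_of_lt hi)
    have hidx : n - 2 + 2^i - sPart (n+1-2^t) i = 2^(t+1) - 3 := by omega
    rw [hidx]
    have he : t + 1 = (t-1) + 2 := by omega
    rw [he]; exact g_zero (t-1)
  · intro u hiu hut hu1 hzeros
    rw [f, hu1, one_mul]
    have hz := zeros_sum (n+1-2^t) i u hiu hzeros
    have hsu : sPart (n+1-2^t) (u+1) = sPart (n+1-2^t) i + 2^u := by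
      rw [sPart_succ, hu1, hz]; ring
    rw [hz, hsu]
    have hidx : n - 2 + 2^u - (sPart (n+1-2^t) i + 2^u) = n - 2 - sPart (n+1-2^t) i := by
      omega
    rw [hidx]
  · intro hall
    have hz := zeros_sum (n+1-2^t) i t (le_of_lt hi) hall
    have hfull : sPart (n+1-2^t) t = n+1-2^t := by
      rw [sPart_mod]; exact Nat.mod_eq_of_lt hNlt
    have h8 : (8:ℕ) ≤ 2^t := by
      calc (8:ℕ) = 2^3 := rfl
      _ ≤ 2^t := Nat.pow_le_pow_right (by norm_num) ht
    have hidx : n - 2 - sPart (n+1-2^t) i = 2^t - 3 := by omega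
    rw [hidx]
    have he : t = (t-2) + 2 := by omega
    rw [he, g_zero, mul_zero]

end
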